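/- Outermost lifting lemma: Let R be a rewrite system, s ∈ T(F,X), α a ground substitution such that αs is outermost-reducible at a non-variable position p of s, and Y ⊆ X a set of variables with Var(s) ∪ Dom(α) ⊆ Y. If αs rewrites outermost at position p with rule l→r to t', then there exist a term s' ∈ T(F,X) and substitutions β and σ = σ0 ∧ ⋀_{j=1..k} ¬σ_j such that: (1) s outermost-narrows to s' at position p with rule l→r and constrained substitution σ; (2) βs' = t'; (3) βσ0 = α on Y; and (4) β satisfies ⋀_{j=1..k} ¬σ_j; where σ0 is the most general unifier of s|_p and l and σ_1,…,σ_k are all most general unifiers of σ0(s|_{p'}) with a left-hand side of a rule of R, for all positions p' of s that are strict prefixes of p. -/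

import Mathlib

namespace TRS

inductive Term (F V : Type*) where
  | var : V → Term F V
  | app : F → List (Term F V) → Term F V

namespace Term

variable {F V : Type*}

mutual
  def subst (σ : V → Term F V) : Term F V → Term F V
    | .var x => σ x
    | .app f ts => .app f (substList σ ts)

  def substList (σ : V → Term F V) : List (Term F V) → List (Term F V)
    | [] => []
    | t :: ts => subst σ t :: substList σ ts
end

mutual
  def vars : Term F V → Set V
    | .var x => {x}
    | .app _ ts => varsList ts

  def varsList : List (Term F V) → Set V
    | [] => ∅
    | t :: ts => vars t ∪ varsList ts
end

def IsGround (t : Term F V) : Prop := vars t = ∅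

def top : Term F V → Option F
  | .var _ => none
  | .app f _ => some f

def subtermAt : List ℕ → Term F V → Option (Term F V)
  | [], t => some t
  | _ :: _, .var _ => none
  | i :: p, .app _ ts =>
    match ts[i]? with
    | none => none
    | some u => subtermAt p u

def replaceAt : List ℕ → Term F V → Term F V → Option (Term F V)
  | [], _, u => some u
  | _ :: _, .var _, _ => none
  | i :: p, .app f ts, u =>
    match ts[i]? with
    | none => none
    | some ti =>
      match replaceAt p ti u with
      | none => none
      | some ti' => some (.app f (ts.set i ti'))

inductive WF (arity : F → ℕ) : Term F V → Prop
  | var (x : V) : WF arity (.var x)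
  | app (f : F) (ts : List (Term F V)) :
      ts.length = arity f → (∀ t ∈ ts, WF arity t) → WF arity (.app f ts)

inductive Occurs (f : F) : Term F V → Prop
  | head (ts : List (Term F V)) : Occurs f (.app f ts)
  | arg {g : F} {ts : List (Term F V)} {t : Term F V} :
      t ∈ ts → Occurs f t → Occurs f (.app g ts)

end Term

open Term

structure Rule (F V : Type*) where
  lhs : Term F V
  rhs : Term F V

variable {F V : Type*}

/-- The domain of a substitution. -/
def SDom (σ : V → Term F V) : Set V := {x | σ x ≠ Term.var x}

/-- The range (variables) of a substitution. -/
def SRan (σ : V → Term F V) : Set V := ⋃ x ∈ SDom σ, vars (σ x)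

/-- A ground substitution maps every variable of its domain to a ground term. -/
def GroundSubst (σ : V → Term F V) : Prop := ∀ x ∈ SDom σ, IsGround (σ x)

/-- `R` is a rewrite system: no left-hand side is a variable, and
`Var(rhs) ⊆ Var(lhs)` for every rule. -/
def IsRS (R : List (Rule F V)) : Prop :=
  ∀ ρ ∈ R, (∀ x : V, ρ.lhs ≠ Term.var x) ∧ vars ρ.rhs ⊆ vars ρ.lhs

/-- Rewriting at position `p` with the rule `l → r`. -/
def RewriteAtWith (l r : Term F V) (p : List ℕ) (s t : Term F V) : Prop :=
  ∃ τ : V → Term F V, subtermAt p s = some (subst τ l) ∧ replaceAt p s (subst τ r) = some t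

/-- Rewriting at position `p` with some rule of `R`. -/
def RewriteAt (R : List (Rule F V)) (p : List ℕ) (s t : Term F V) : Prop :=
  ∃ ρ ∈ R, RewriteAtWith ρ.lhs ρ.rhs p s t

/-- The rewriting relation induced by `R`. -/
def Rewrite (R : List (Rule F V)) (s t : Term F V) : Prop :=
  ∃ p, RewriteAt R p s t

def ReducibleAt (R : List (Rule F V)) (s : Term F V) (p : List ℕ) : Prop :=
  ∃ t, RewriteAt R p s t

def Reducible (R : List (Rule F V)) (s : Term F V) : Prop :=
  ∃ t, Rewrite R s t

def NormalForm (R : List (Rule F V)) (s : Term F V) : Prop := ¬ Reducible R s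

/-- `n` is a normal form of `s`. -/
def IsNormalFormOf (R : List (Rule F V)) (s n : Term F V) : Prop :=
  Relation.ReflTransGen (Rewrite R) s n ∧ NormalForm R n

/-- `q` is strictly below `p` (`p` is a strict prefix of `q`). -/
def StrictBelow (p q : List ℕ) : Prop := p <+: q ∧ p ≠ q

/-- Innermost rewrite step at position `p`. -/
def InnAt (R : List (Rule F V)) (p : List ℕ) (s t : Term F V) : Prop :=
  RewriteAt R p s t ∧ ∀ q, StrictBelow p q → ¬ ReducibleAt R s q

def InnStep (R : List (Rule F V)) (s t : Term F V) : Prop := ∃ p, InnAt R p s t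

/-- Outermost rewrite step at position `p`. -/
def OutAt (R : List (Rule F V)) (p : List ℕ) (s t : Term F V) : Prop :=
  RewriteAt R p s t ∧ ∀ q, StrictBelow q p → ¬ ReducibleAt R s q

def OutStep (R : List (Rule F V)) (s t : Term F V) : Prop := ∃ p, OutAt R p s t

/-- Innermost rewrite step at position `p` with rule `l → r`. -/
def InnAtWith (R : List (Rule F V)) (l r : Term F V) (p : List ℕ) (s t : Term F V) : Prop :=
  RewriteAtWith l r p s t ∧ ∀ q, StrictBelow p q → ¬ ReducibleAt R s q

/-- Outermost rewrite step at position `p` with rule `l → r`. -/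
def OutAtWith (R : List (Rule F V)) (l r : Term F V) (p : List ℕ) (s t : Term F V) : Prop :=
  RewriteAtWith l r p s t ∧ ∀ q, StrictBelow q p → ¬ ReducibleAt R s q

/-- No infinite innermost derivation starts from `t`. -/
def InnTerminates (R : List (Rule F V)) (t : Term F V) : Prop :=
  ¬ ∃ f : ℕ → Term F V, f 0 = t ∧ ∀ n, InnStep R (f n) (f (n + 1))

/-- No infinite outermost derivation starts from `t`. -/
def OutTerminates (R : List (Rule F V)) (t : Term F V) : Prop :=
  ¬ ∃ f : ℕ → Term F V, f 0 = t ∧ ∀ n, OutStep R (f n) (f (n + 1))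

def Unifies (σ : V → Term F V) (u v : Term F V) : Prop := subst σ u = subst σ v

/-- `σ` is a most general unifier of `u` and `v`. -/
def IsMGU (u v : Term F V) (σ : V → Term F V) : Prop :=
  Unifies σ u v ∧
    ∀ τ : V → Term F V, Unifies τ u v → ∃ ρ : V → Term F V, ∀ x, subst ρ (σ x) = τ x

/-- The usable rules of a term (least set closed under the defining equations). -/
inductive Usable (R : List (Rule F V)) (XA : Set V) : Term F V → Rule F V → Prop
  | var {x : V} {ρ : Rule F V} : x ∉ XA → ρ ∈ R → Usable R XA (Term.var x) ρ
  | rls {f : F} {ts : List (Term F V)} {ρ : Rule F V} :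
      ρ ∈ R → Term.top ρ.lhs = some f → Usable R XA (Term.app f ts) ρ
  | arg {f : F} {ts : List (Term F V)} {t : Term F V} {ρ : Rule F V} :
      t ∈ ts → Usable R XA t ρ → Usable R XA (Term.app f ts) ρ
  | rhs {f : F} {ts : List (Term F V)} {ρ' ρ : Rule F V} :
      ρ' ∈ R → Term.top ρ'.lhs = some f → Usable R XA ρ'.rhs ρ → Usable R XA (Term.app f ts) ρ

/-! Glue `α` (on `Y`) and the matcher `τ` of the step `αs|_p = τl` (on the variables of `l`, which
avoid `Y`) into one substitution `γ`. It unifies `s|_p` and `l`, so a most general unifier `σ₀`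
exists, with `γ = βσ₀` for some `β`; then `βσ₀ = α` on `Y` and `βs' = γ(s[r]_p) = t'`. If `β`
violated a constraint `¬σⱼ`, i.e. `β = βσⱼ`, then `αs|_{p'} = βσ₀(s|_{p'})` would be an instance of
a left-hand side at a position strictly above `p`, contradicting outermostness.
Existence of most general unifiers is shown by Martelli–Montanari unification on simultaneous
equation systems, terminating on the number of variables, then the size of the system. -/

namespace Term

@[elab_as_elim, induction_eliminator]
theorem induction {motive : Term F V → Prop} (var : ∀ x, motive (.var x))
    (app : ∀ f ts, (∀ t ∈ ts, motive t) → motive (.app f ts)) (t : Term F V) : motive t := by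
  induction t using Term.rec (motive_2 := fun ts => ∀ t ∈ ts, motive t) with
  | var x => exact var x
  | app f ts ih => exact app f ts ih
  | nil => rename_i t ht; cases ht
  | cons t ts ht hts =>
    rename_i u hu
    rcases List.mem_cons.mp hu with rfl | hu
    exacts [ht, hts u hu]

@[simp]
theorem subst_var (σ : V → Term F V) (x : V) : subst σ (.var x) = σ x := by
  simp [subst]

theorem substList_eq_map (σ : V → Term F V) (ts : List (Term F V)) :
    substList σ ts = ts.map (subst σ) := by
  induction ts with
  | nil => simp [substList]
  | cons t ts ih => simp [substList, ih]

@[simp]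
theorem subst_app (σ : V → Term F V) (f : F) (ts : List (Term F V)) :
    subst σ (.app f ts) = .app f (ts.map (subst σ)) := by
  simp [subst, substList_eq_map]

theorem mem_varsList {x : V} {ts : List (Term F V)} : x ∈ varsList ts ↔ ∃ t ∈ ts, x ∈ vars t := by
  induction ts with
  | nil => simp [varsList]
  | cons t ts ih => simp [varsList, ih]

@[simp]
theorem vars_var (x : V) : vars (F := F) (.var x) = {x} := by
  simp [vars]

@[simp]
theorem mem_vars_app {x : V} {f : F} {ts : List (Term F V)} :
    x ∈ vars (.app f ts) ↔ ∃ t ∈ ts, x ∈ vars t := by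
  simp [vars, mem_varsList]

theorem subst_subst (θ δ : V → Term F V) (t : Term F V) :
    subst θ (subst δ t) = subst (fun x => subst θ (δ x)) t := by
  induction t with
  | var x => simp
  | app f ts ih => simpa using List.map_congr_left ih

theorem subst_congr {θ δ : V → Term F V} {t : Term F V} (h : ∀ x ∈ vars t, θ x = δ x) :
    subst θ t = subst δ t := by
  induction t with
  | var x => simpa using h
  | app f ts ih =>
    simp only [mem_vars_app] at h
    simpa using List.map_congr_left fun u hu => ih u hu fun x hx => h x ⟨u, hu, hx⟩

theorem subst_eq_self {θ : V → Term F V} {t : Term F V} (h : ∀ x ∈ vars t, θ x = .var x) :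
    subst θ t = t := by
  induction t with
  | var x => simpa using h
  | app f ts ih =>
    simp only [mem_vars_app] at h
    simpa using List.map_congr_left fun u hu => ih u hu fun x hx => h x ⟨u, hu, hx⟩

theorem finite_vars (t : Term F V) : (vars t).Finite := by
  induction t with
  | var x => simp
  | app f ts ih =>
    convert Set.Finite.biUnion ts.finite_toSet ih using 1
    ext; simp

theorem vars_subst_subset (θ : V → Term F V) (t : Term F V) :
    vars (subst θ t) ⊆ ⋃ x ∈ vars t, vars (θ x) := by
  induction t with
  | var x => simp
  | app f ts ih =>
    intro y hy
    simp only [subst_app, mem_vars_app, List.mem_map] at hy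
    obtain ⟨_, ⟨u, hu, rfl⟩, hyu⟩ := hy
    obtain ⟨x, hx, hyx⟩ := Set.mem_iUnion₂.mp (ih u hu hyu)
    exact Set.mem_iUnion₂.mpr ⟨x, mem_vars_app.mpr ⟨u, hu, hx⟩, hyx⟩

@[simp]
theorem varsList_cons (t : Term F V) (ts : List (Term F V)) :
    varsList (t :: ts) = vars t ∪ varsList ts := by
  simp [varsList]

@[simp]
theorem varsList_append (ts us : List (Term F V)) :
    varsList (ts ++ us) = varsList ts ∪ varsList us := by
  induction ts with
  | nil => simp [varsList]
  | cons t ts ih => simp [ih, Set.union_assoc]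

theorem finite_varsList (ts : List (Term F V)) : (varsList ts).Finite := by
  convert Set.Finite.biUnion ts.finite_toSet fun t _ => finite_vars t using 1
  ext; simp [mem_varsList]

theorem subst_subst_update [DecidableEq V] {τ : V → Term F V} {x : V} {v : Term F V}
    (h : τ x = subst τ v) (t : Term F V) :
    subst τ (subst (Function.update Term.var x v) t) = subst τ t := by
  rw [subst_subst]
  refine subst_congr fun y _ => ?_
  rcases eq_or_ne y x with rfl | hy <;> simp [*]

theorem varsList_map_subst_update_subset [DecidableEq V] {x : V} {v : Term F V}
    (hx : x ∉ vars v) (ts : List (Term F V)) :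
    varsList (ts.map (subst (Function.update Term.var x v))) ⊆ (varsList ts ∪ vars v) \ {x} := by
  intro y hy
  simp only [mem_varsList, List.mem_map] at hy
  obtain ⟨_, ⟨t, ht, rfl⟩, hyt⟩ := hy
  obtain ⟨z, hz, hyz⟩ := Set.mem_iUnion₂.mp (vars_subst_subset _ t hyt)
  rcases eq_or_ne z x with rfl | hzx
  · simp only [Function.update_self] at hyz
    exact ⟨Or.inr hyz, fun h => hx (h ▸ hyz)⟩
  · simp only [Function.update_of_ne hzx, vars_var, Set.mem_singleton_iff] at hyz
    subst hyz
    exact ⟨Or.inl (mem_varsList.mpr ⟨t, ht, hz⟩), hzx⟩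

mutual
  def size : Term F V → ℕ
    | .var _ => 1
    | .app _ ts => 1 + sizeList ts

  def sizeList : List (Term F V) → ℕ
    | [] => 0
    | t :: ts => size t + sizeList ts
end

@[simp]
theorem sizeList_nil : sizeList (F := F) (V := V) [] = 0 := by
  simp [sizeList]

@[simp]
theorem sizeList_cons (t : Term F V) (ts : List (Term F V)) :
    sizeList (t :: ts) = size t + sizeList ts := by
  simp [sizeList]

@[simp]
theorem sizeList_append (ts us : List (Term F V)) :
    sizeList (ts ++ us) = sizeList ts + sizeList us := by
  induction ts with
  | nil => simp
  | cons t ts ih => simp [ih, Nat.add_assoc]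

@[simp]
theorem size_var (x : V) : size (F := F) (.var x) = 1 := by
  simp [size]

@[simp]
theorem size_app (f : F) (ts : List (Term F V)) : size (.app f ts) = 1 + sizeList ts := by
  simp [size]

theorem size_pos (t : Term F V) : 0 < size t := by
  cases t <;> simp

theorem size_le_sizeList {t : Term F V} {ts : List (Term F V)} (h : t ∈ ts) :
    size t ≤ sizeList ts := by
  induction ts with
  | nil => cases h
  | cons u us ih =>
    rcases List.mem_cons.mp h with rfl | h
    · simp
    · have := ih h
      simp only [sizeList_cons]
      omega

theorem size_le_size_subst (θ : V → Term F V) {x : V} {t : Term F V} (hx : x ∈ vars t) :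
    size (θ x) ≤ size (subst θ t) := by
  induction t with
  | var y => simp_all
  | app f ts ih =>
    obtain ⟨u, hu, hxu⟩ := mem_vars_app.mp hx
    have := size_le_sizeList (List.mem_map_of_mem (f := subst θ) hu)
    have := ih u hu hxu
    simp only [subst_app, size_app]
    omega

theorem eq_var_of_subst_eq {θ : V → Term F V} {x : V} {t : Term F V}
    (h : θ x = subst θ t) (hx : x ∈ vars t) : t = .var x := by
  cases t with
  | var y => simp_all
  | app f ts =>
    obtain ⟨u, hu, hxu⟩ := mem_vars_app.mp hx
    have h₁ := size_le_size_subst θ hxu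
    have h₂ := size_le_sizeList (List.mem_map_of_mem (f := subst θ) hu)
    have h₃ : size (θ x) = 1 + sizeList (ts.map (subst θ)) := by simp [h]
    omega

theorem subtermAt_subst (θ : V → Term F V) {p : List ℕ} {s t : Term F V}
    (h : subtermAt p s = some t) : subtermAt p (subst θ s) = some (subst θ t) := by
  induction p generalizing s with
  | nil => simp_all [subtermAt]
  | cons i p ih =>
    cases s with
    | var x => simp [subtermAt] at h
    | app f ts =>
      cases hti : ts[i]? with
      | none => simp [subtermAt, hti] at h
      | some u => simp_all [subtermAt]

theorem vars_subset_of_subtermAt {p : List ℕ} {s t : Term F V} (h : subtermAt p s = some t) :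
    vars t ⊆ vars s := by
  induction p generalizing s with
  | nil => simp_all [subtermAt]
  | cons i p ih =>
    cases s with
    | var x => simp [subtermAt] at h
    | app f ts =>
      cases hti : ts[i]? with
      | none => simp [subtermAt, hti] at h
      | some u =>
        simp only [subtermAt, hti] at h
        exact fun x hx => mem_vars_app.mpr ⟨u, List.mem_of_getElem? hti, ih h hx⟩

theorem exists_replaceAt_of_subtermAt {p : List ℕ} {s t : Term F V}
    (h : subtermAt p s = some t) (u : Term F V) : ∃ w, replaceAt p s u = some w := by
  induction p generalizing s with
  | nil => simp [replaceAt]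
  | cons i p ih =>
    cases s with
    | var x => simp [subtermAt] at h
    | app f ts =>
      cases hti : ts[i]? with
      | none => simp [subtermAt, hti] at h
      | some v =>
        simp only [subtermAt, hti] at h
        obtain ⟨w, hw⟩ := ih h
        exact ⟨.app f (ts.set i w), by simp [replaceAt, hti, hw]⟩

theorem replaceAt_subst (θ : V → Term F V) {p : List ℕ} {s u w : Term F V}
    (h : replaceAt p s u = some w) : replaceAt p (subst θ s) (subst θ u) = some (subst θ w) := by
  induction p generalizing s w with
  | nil => simp_all [replaceAt]
  | cons i p ih =>
    cases s with
    | var x => simp [replaceAt] at h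
    | app f ts =>
      cases hti : ts[i]? with
      | none => simp [replaceAt, hti] at h
      | some v =>
        cases hv : replaceAt p v u with
        | none => simp [replaceAt, hti, hv] at h
        | some v' =>
          simp only [replaceAt, hti, hv, Option.some.injEq] at h
          subst h
          simp [replaceAt, hti, ih hv, List.map_set]

end Term

section Unification

open Function

variable {us vs : List (Term F V)} {σ : V → Term F V}

/-- `σ` is a most general simultaneous unifier of the equations `us[i] ≐ vs[i]`. -/
def IsMGUList (us vs : List (Term F V)) (σ : V → Term F V) : Prop :=
  us.map (subst σ) = vs.map (subst σ) ∧
    ∀ τ : V → Term F V, us.map (subst τ) = vs.map (subst τ) →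
      ∃ ρ : V → Term F V, ∀ x, subst ρ (σ x) = τ x

namespace IsMGUList

theorem of_unifiers_iff {us' vs' : List (Term F V)}
    (h : ∀ τ : V → Term F V,
      us.map (subst τ) = vs.map (subst τ) ↔ us'.map (subst τ) = vs'.map (subst τ))
    (hσ : IsMGUList us' vs' σ) : IsMGUList us vs σ :=
  ⟨(h σ).mpr hσ.1, fun τ hτ => hσ.2 τ ((h τ).mp hτ)⟩

theorem nil : IsMGUList [] [] (Term.var : V → Term F V) :=
  ⟨rfl, fun τ _ => ⟨τ, by simp⟩⟩

theorem symm (hσ : IsMGUList us vs σ) : IsMGUList vs us σ :=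
  hσ.of_unifiers_iff fun _ => eq_comm

theorem cons_self (u : Term F V) (hσ : IsMGUList us vs σ) : IsMGUList (u :: us) (u :: vs) σ :=
  hσ.of_unifiers_iff fun _ => by simp

theorem app_cons (f : F) {as bs : List (Term F V)} (hlen : as.length = bs.length)
    (hσ : IsMGUList (as ++ us) (bs ++ vs) σ) :
    IsMGUList (.app f as :: us) (.app f bs :: vs) σ := by
  refine hσ.of_unifiers_iff fun τ => ?_
  simp only [List.map_cons, subst_app, List.cons.injEq, Term.app.injEq, true_and, List.map_append]
  exact ⟨fun h => by rw [h.1, h.2], fun h => List.append_inj h (by simpa using hlen)⟩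

theorem var_cons [DecidableEq V] {x : V} {v : Term F V} (hx : x ∉ vars v)
    (hσ : IsMGUList (us.map (subst (update Term.var x v)))
      (vs.map (subst (update Term.var x v))) σ) :
    IsMGUList (.var x :: us) (v :: vs) fun y => subst σ (update Term.var x v y) := by
  have hv : subst (update Term.var x v) v = v :=
    subst_eq_self fun y hy => update_of_ne (ne_of_mem_of_not_mem hy hx) _ _
  refine ⟨?_, fun τ hτ => ?_⟩
  · simp only [List.map_cons, subst_var, update_self, List.cons.injEq, ← subst_subst, hv]
    simpa [comp_def, subst_subst] using hσ.1
  · simp only [List.map_cons, subst_var, List.cons.injEq] at hτ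
    obtain ⟨ρ, hρ⟩ := hσ.2 τ (by simpa [comp_def, subst_subst_update hτ.1] using hτ.2)
    refine ⟨ρ, fun y => ?_⟩
    rw [subst_subst, subst_congr fun z _ => hρ z]
    simpa using subst_subst_update hτ.1 (.var y)

end IsMGUList

theorem lex_lt_of_varsList_subset_of_sizeList_lt {ts ts' : List (Term F V)}
    (hvars : varsList ts ⊆ varsList ts') (hsize : sizeList ts < sizeList ts') :
    Prod.Lex (· < ·) (· < ·) ((varsList ts).ncard, sizeList ts)
      ((varsList ts').ncard, sizeList ts') := by
  rcases (Set.ncard_le_ncard hvars (finite_varsList ts')).lt_or_eq with h | h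
  · exact .left _ _ h
  · exact h ▸ .right _ hsize

theorem lex_lt_of_varsList_subset_diff {ts ts' : List (Term F V)} {x : V}
    (hx : x ∈ varsList ts') (hvars : varsList ts ⊆ varsList ts' \ {x}) :
    Prod.Lex (· < ·) (· < ·) ((varsList ts).ncard, sizeList ts)
      ((varsList ts').ncard, sizeList ts') :=
  .left _ _ <| (Set.ncard_le_ncard hvars ((finite_varsList ts').sdiff)).trans_lt
    (Set.ncard_sdiff_singleton_lt_of_mem hx (finite_varsList ts'))

theorem exists_isMGUList :
    ∀ us vs : List (Term F V), (∃ θ : V → Term F V, us.map (subst θ) = vs.map (subst θ)) →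
      ∃ σ, IsMGUList us vs σ
  | [], [], _ => ⟨_, .nil⟩
  | [], _ :: _, ⟨_, h⟩ | _ :: _, [], ⟨_, h⟩ => by simp at h
  | .var x :: us, v :: vs, ⟨θ, h⟩ => by
    classical
    simp only [List.map_cons, subst_var, List.cons.injEq] at h
    obtain ⟨hxv, hts⟩ := h
    by_cases hv : v = .var x
    · subst hv
      obtain ⟨σ, hσ⟩ := exists_isMGUList us vs ⟨θ, hts⟩
      exact ⟨σ, hσ.cons_self _⟩
    have hx : x ∉ vars v := fun hx => hv (eq_var_of_subst_eq hxv hx)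
    obtain ⟨σ, hσ⟩ := exists_isMGUList (us.map (subst (update Term.var x v)))
      (vs.map (subst (update Term.var x v)))
      ⟨θ, by simpa [comp_def, subst_subst_update hxv] using hts⟩
    exact ⟨_, hσ.var_cons hx⟩
  | .app f as :: us, .var x :: vs, ⟨θ, h⟩ => by
    classical
    simp only [List.map_cons, subst_var, List.cons.injEq] at h
    obtain ⟨hxv, hts⟩ := h
    have hx : x ∉ vars (.app f as) := fun hx => by cases eq_var_of_subst_eq hxv.symm hx
    obtain ⟨σ, hσ⟩ := exists_isMGUList (us.map (subst (update Term.var x (.app f as))))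
      (vs.map (subst (update Term.var x (.app f as))))
      ⟨θ, by simpa [comp_def, subst_subst_update hxv.symm] using hts⟩
    exact ⟨_, (hσ.symm.var_cons hx).symm⟩
  | .app f as :: us, .app g bs :: vs, ⟨θ, h⟩ => by
    simp only [List.map_cons, subst_app, List.cons.injEq, Term.app.injEq] at h
    obtain ⟨⟨rfl, hargs⟩, hts⟩ := h
    have hlen : as.length = bs.length := by simpa using congrArg List.length hargs
    obtain ⟨σ, hσ⟩ := exists_isMGUList (as ++ us) (bs ++ vs) ⟨θ, by simp [hargs, hts]⟩
    exact ⟨σ, hσ.app_cons f hlen⟩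
termination_by us vs => ((varsList (us ++ vs)).ncard, sizeList (us ++ vs))
decreasing_by
  · refine lex_lt_of_varsList_subset_of_sizeList_lt (fun y => ?_)
      (by simp only [List.cons_append, sizeList_cons, sizeList_append, size_var]; omega)
    simp only [varsList_append, varsList_cons, Set.mem_union]
    tauto
  iterate 2
    classical
    refine lex_lt_of_varsList_subset_diff (x := x) (by simp) ?_
    rw [← List.map_append]
    refine (varsList_map_subst_update_subset hx _).trans (Set.sdiff_subset_sdiff_left fun y => ?_)
    simp only [varsList_append, varsList_cons, Set.mem_union]
    tauto
  · refine lex_lt_of_varsList_subset_of_sizeList_lt (fun y => ?_)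
      (by simp only [List.cons_append, sizeList_cons, sizeList_append, size_app]; omega)
    simp only [varsList_append, varsList_cons, vars, Set.mem_union]
    tauto

theorem exists_isMGU {u v : Term F V} {θ : V → Term F V} (h : Unifies θ u v) :
    ∃ σ, IsMGU u v σ := by
  obtain ⟨σ, hσ⟩ := exists_isMGUList [u] [v] ⟨θ, by simpa [Unifies] using h⟩
  exact ⟨σ, by simpa [Unifies] using hσ.1, fun τ hτ => hσ.2 τ (by simpa [Unifies] using hτ)⟩

end Unification

theorem reducibleAt_of_subtermAt_eq_subst {R : List (Rule F V)} {ρ : Rule F V} (hρ : ρ ∈ R)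
    {p : List ℕ} {t : Term F V} {θ : V → Term F V} (h : subtermAt p t = some (subst θ ρ.lhs)) :
    ReducibleAt R t p := by
  obtain ⟨w, hw⟩ := exists_replaceAt_of_subtermAt h (subst θ ρ.rhs)
  exact ⟨w, ρ, hρ, θ, h, hw⟩

theorem exists_ne_subst_of_not_reducibleAt {R : List (Rule F V)} {ρ : Rule F V} (hρ : ρ ∈ R)
    {s sp : Term F V} {p : List ℕ} {α β σ₀ ν π : V → Term F V}
    (hred : ¬ ReducibleAt R (subst α s) p) (hsp : subtermAt p s = some sp)
    (hβ : ∀ x ∈ vars s, subst β (σ₀ x) = α x) (hν : Unifies ν (subst σ₀ sp) (subst π ρ.lhs)) :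
    ∃ x, β x ≠ subst β (ν x) := by
  by_contra! hβν
  have hβν' (t : Term F V) : subst β (subst ν t) = subst β t := by
    rw [subst_subst]
    exact subst_congr fun x _ => (hβν x).symm
  have hαsp : subst α sp = subst β (subst σ₀ sp) := by
    rw [subst_subst]
    exact (subst_congr fun x hx => hβ x (vars_subset_of_subtermAt hsp hx)).symm
  have hinst : subst α sp = subst (fun x => subst β (π x)) ρ.lhs := by
    rw [hαsp, ← hβν', hν, hβν', subst_subst]
  exact hred (reducibleAt_of_subtermAt_eq_subst hρ (hinst ▸ subtermAt_subst α hsp))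

/-- outermost lifting lemma.
If `αs` rewrites outermost at the non-variable position `p` of `s` with rule `l→r` to `t'`,
then `s` outermost-narrows at `p` with `l→r` and a constrained substitution
`σ = σ₀ ∧ ⋀_j ¬σ_j` into some `s'`, and there is a `β` with `βs' = t'`, `βσ₀ = α` on `Y`,
and `β` satisfies every `¬σ_j`, where the `σ_j` range over all most general unifiers of
`σ₀(s|_{p'})` with a (renamed, variable-disjoint) left-hand side of a rule of `R`,
for all positions `p'` of `s` that are strict prefixes of `p`. -/
theorem outermost_lifting {F V : Type*}
    (R : List (Rule F V)) (hRS : IsRS R)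
    (s : Term F V) (α : V → Term F V) (hα : GroundSubst α)
    (Y : Set V) (hYs : vars s ⊆ Y) (hYd : SDom α ⊆ Y)
    -- the variables of the rules are renamed away from `Y`
    (hYR : ∀ ρ ∈ R, ∀ x ∈ vars ρ.lhs, x ∉ Y)
    (l r : Term F V) (hrule : (⟨l, r⟩ : Rule F V) ∈ R)
    (p : List ℕ) (sp : Term F V)
    (hsp : subtermAt p s = some sp) (hnv : ∀ x : V, sp ≠ Term.var x)
    (t' : Term F V)
    -- `αs` rewrites outermost at position `p` with rule `l→r` to `t'`
    (hstep : RewriteAtWith l r p (subst α s) t')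
    (hout : ∀ q, StrictBelow q p → ¬ ReducibleAt R (subst α s) q) :
    ∃ (s' : Term F V) (β σ0 : V → Term F V),
      -- (1) `s` outermost-narrows to `s'` at `p` with rule `l→r` and mgu `σ₀`
      (IsMGU sp l σ0 ∧ ∃ w, replaceAt p s r = some w ∧ s' = subst σ0 w) ∧
      -- (2) `βs' = t'`
      subst β s' = t' ∧
      -- (3) `βσ₀ = α` on `Y`
      (∀ x ∈ Y, subst β (σ0 x) = α x) ∧
      -- (4) `β` satisfies `¬σ_j` for every mgu `σ_j` of `σ₀(s|_{p'})` with a renamed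
      -- left-hand side of a rule of `R`, `p'` a strict prefix position of `p` in `s`
      (∀ p' : List ℕ, StrictBelow p' p → ∀ sp', subtermAt p' s = some sp' →
        ∀ ρ' ∈ R, ∀ ξ : V → V, Function.Injective ξ →
          (∀ x ∈ vars (subst (fun y => Term.var (ξ y)) ρ'.lhs),
              x ∉ Y ∧ x ∉ vars (subst σ0 sp')) →
          ∀ ν : V → Term F V,
            IsMGU (subst σ0 sp') (subst (fun y => Term.var (ξ y)) ρ'.lhs) ν →
            ∃ x : V, β x ≠ subst β (ν x)) := by
  classical
  obtain ⟨τ, hτl, hτr⟩ := hstep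
  set γ := Y.piecewise α τ
  have hγs : subst γ s = subst α s :=
    subst_congr fun x hx => Y.piecewise_eq_of_mem _ _ (hYs hx)
  have hγl {t : Term F V} (ht : vars t ⊆ vars l) : subst γ t = subst τ t :=
    subst_congr fun x hx => Y.piecewise_eq_of_notMem _ _ (hYR _ hrule x (ht hx))
  have hγ : Unifies γ sp l := by
    have := subtermAt_subst γ hsp
    rw [hγs, hτl, Option.some.injEq] at this
    rw [Unifies, ← this, hγl subset_rfl]
  obtain ⟨σ0, hσ0⟩ := exists_isMGU hγ
  obtain ⟨β, hβ⟩ := hσ0.2 γ hγ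
  have hβγ (t : Term F V) : subst β (subst σ0 t) = subst γ t := by
    rw [subst_subst]
    exact subst_congr fun x _ => hβ x
  obtain ⟨w, hw⟩ := exists_replaceAt_of_subtermAt hsp r
  have hβY (x : V) (hx : x ∈ Y) : subst β (σ0 x) = α x :=
    (hβ x).trans (Y.piecewise_eq_of_mem _ _ hx)
  refine ⟨subst σ0 w, β, σ0, ⟨hσ0, w, hw, rfl⟩, ?_, hβY, ?_⟩
  · have := replaceAt_subst γ hw
    rw [hγs, hγl (hRS _ hrule).2, hτr, Option.some.injEq] at this
    rw [hβγ, this]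
  · intro p' hp' sp' hsp' ρ' hρ' _ _ _ ν hν
    exact exists_ne_subst_of_not_reducibleAt hρ' (hout p' hp') hsp'
      (fun x hx => hβY x (hYs hx)) hν.1

end TRS
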